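/- Let (σ, ε) and (ρ, η) be admissible pairs for a division ring K with ε, η ∈ {1, −1}, and let c₁, c₂ ∈ K \ {0}. Suppose that for all s, t ∈ K: (i) s + σ(t)·ε = 0 if and only if c₁·s + ρ(t)·ρ(c₂)·η = 0, and (ii) 1 + σ(t)·s = 0 if and only if c₁ + ρ(t)·c₂·s = 0. Then c₁ = c₂ =: c, and c satisfies σ(c) = ρ(c) = c·ε·η⁻¹, ρ(t) = c·σ(t)·c⁻¹ for every t ∈ K, and c·σ(c)⁻¹·ε = η. -/

import Mathlib

/-- An anti-automorphism of a division ring `K`: an additive bijection `σ` with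
`σ (s * t) = σ t * σ s` and `σ 1 = 1`. -/
def IsAntiAuto {K : Type*} [DivisionRing K] (σ : K → K) : Prop :=
  Function.Bijective σ ∧ (∀ s t : K, σ (s + t) = σ s + σ t) ∧
    (∀ s t : K, σ (s * t) = σ t * σ s) ∧ σ 1 = 1

/-- An admissible pair `(σ, ε)` for a division ring `K`. -/
def IsAdmissiblePair {K : Type*} [DivisionRing K] (σ : K → K) (ε : K) : Prop :=
  IsAntiAuto σ ∧ ε ≠ 0 ∧ σ ε = ε⁻¹ ∧ ∀ t : K, σ (σ t) = ε * t * ε⁻¹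

/-!
Testing (i) at `s = -σ t * ε` and (ii) at `s = -(σ t)⁻¹` shows that each equivalence forces a
multiplicative identity: `ρ t * ρ c₂ * η = c₁ * σ t * ε` and `ρ t * c₂ = c₁ * σ t`. At `t = 1`
the second gives `c₁ = c₂`, and then it says that `ρ` is `σ` conjugated by `c₁`; at `t = 1`
the first gives `ρ c₁ = c₁ * ε * η⁻¹`. Since `ε, η = ±1` are central, everything else is
bookkeeping.
-/

namespace IsAntiAuto

variable {K : Type*} [DivisionRing K] {σ : K → K}

theorem map_zero (hσ : IsAntiAuto σ) : σ 0 = 0 := by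
  simpa using hσ.2.1 0 0

theorem map_one (hσ : IsAntiAuto σ) : σ 1 = 1 :=
  hσ.2.2.2

theorem map_ne_zero (hσ : IsAntiAuto σ) {t : K} (ht : t ≠ 0) : σ t ≠ 0 :=
  fun h => ht (hσ.1.1 (h.trans hσ.map_zero.symm))

end IsAntiAuto

section OrthogonalityEquivalence

variable {K : Type*} [DivisionRing K] {c x y : K}

theorem eq_mul_of_forall_add_eq_zero_iff (h : ∀ s : K, s + x = 0 ↔ c * s + y = 0) :
    y = c * x := by
  have := (h (-x)).mp (neg_add_cancel x)
  rw [mul_neg, neg_add_eq_zero] at this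
  exact this.symm

theorem eq_mul_of_forall_one_add_mul_eq_zero_iff (hx : x ≠ 0)
    (h : ∀ s : K, 1 + x * s = 0 ↔ c + y * s = 0) : y = c * x := by
  have := (h (-x⁻¹)).mp (by rw [mul_neg, mul_inv_cancel₀ hx, add_neg_cancel])
  rw [mul_neg, add_neg_eq_zero, eq_mul_inv_iff_mul_eq₀ hx] at this
  exact this.symm

end OrthogonalityEquivalence

theorem commute_of_eq_one_or_eq_neg_one {R : Type*} [Ring R] {ε : R} (hε : ε = 1 ∨ ε = -1)
    (x : R) : Commute ε x := by
  rcases hε with rfl | rfl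
  exacts [Commute.one_left x, Commute.neg_one_left x]

theorem mul_inv_mul_eq_inv_of_commute {G₀ : Type*} [GroupWithZero G₀] {c u : G₀} (hc : c ≠ 0)
    (hu : Commute u c) : c * (c * u)⁻¹ = u⁻¹ := by
  rw [mul_inv_rev, ← mul_assoc, ← hu.inv_left₀.eq, mul_inv_cancel_right₀ hc]

theorem statement15_general {K : Type*} [DivisionRing K]
    (σ : K → K) (ε : K) (hσ : IsAdmissiblePair σ ε)
    (ρ : K → K) (η : K) (hρ : IsAdmissiblePair ρ η)
    (hε : ε = 1 ∨ ε = -1) (hη : η = 1 ∨ η = -1)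
    (c₁ c₂ : K) (hc₁ : c₁ ≠ 0)
    (hiff1 : ∀ s t : K, s + σ t * ε = 0 ↔ c₁ * s + ρ t * ρ c₂ * η = 0)
    (hiff2 : ∀ s t : K, 1 + σ t * s = 0 ↔ c₁ + ρ t * c₂ * s = 0) :
    c₁ = c₂ ∧ σ c₁ = ρ c₁ ∧ ρ c₁ = c₁ * ε * η⁻¹ ∧
      (∀ t : K, ρ t = c₁ * σ t * c₁⁻¹) ∧ c₁ * (σ c₁)⁻¹ * ε = η := by
  have hσanti := hσ.1
  have hρanti := hρ.1
  have hconj : ∀ t, ρ t * c₂ = c₁ * σ t := by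
    intro t
    rcases eq_or_ne t 0 with rfl | ht
    · rw [hσanti.map_zero, hρanti.map_zero, zero_mul, mul_zero]
    · exact eq_mul_of_forall_one_add_mul_eq_zero_iff (hσanti.map_ne_zero ht) (hiff2 · t)
  obtain rfl : c₁ = c₂ := by simpa [hσanti.map_one, hρanti.map_one, eq_comm] using hconj 1
  have hρc : ρ c₁ = c₁ * ε * η⁻¹ := by
    have := eq_mul_of_forall_add_eq_zero_iff (hiff1 · 1)
    rw [hσanti.map_one, hρanti.map_one, one_mul, one_mul] at this
    rw [eq_mul_inv_iff_mul_eq₀ hρ.2.1, this]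
  have hcentral : Commute (ε * η⁻¹) c₁ :=
    (commute_of_eq_one_or_eq_neg_one hε c₁).mul_left
      (commute_of_eq_one_or_eq_neg_one hη c₁).inv_left₀
  have hσc : σ c₁ = c₁ * (ε * η⁻¹) := by
    refine mul_left_cancel₀ hc₁ ?_
    rw [← hconj, hρc, mul_assoc c₁ ε, mul_assoc, hcentral.eq]
  refine ⟨rfl, by rw [hσc, hρc, mul_assoc], hρc,
    fun t => (eq_mul_inv_iff_mul_eq₀ hc₁).mpr (hconj t), ?_⟩
  rw [hσc, mul_inv_mul_eq_inv_of_commute hc₁ hcentral, mul_inv_rev, inv_inv,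
    inv_mul_cancel_right₀ hσ.2.1]

/-- With `ε, η ∈ {1, -1}`, if both orthogonality equivalences (i) and (ii) hold, then
`c₁ = c₂ =: c`, and `σ c = ρ c = c * ε * η⁻¹`, `ρ t = c * σ t * c⁻¹` for every `t`,
and `c * (σ c)⁻¹ * ε = η`. -/
theorem statement15 {K : Type*} [DivisionRing K]
    (σ : K → K) (ε : K) (hσ : IsAdmissiblePair σ ε)
    (ρ : K → K) (η : K) (hρ : IsAdmissiblePair ρ η)
    (hε : ε = 1 ∨ ε = -1) (hη : η = 1 ∨ η = -1)
    (c₁ c₂ : K) (hc₁ : c₁ ≠ 0) (hc₂ : c₂ ≠ 0)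
    (hiff1 : ∀ s t : K, s + σ t * ε = 0 ↔ c₁ * s + ρ t * ρ c₂ * η = 0)
    (hiff2 : ∀ s t : K, 1 + σ t * s = 0 ↔ c₁ + ρ t * c₂ * s = 0) :
    c₁ = c₂ ∧ σ c₁ = ρ c₁ ∧ ρ c₁ = c₁ * ε * η⁻¹ ∧
      (∀ t : K, ρ t = c₁ * σ t * c₁⁻¹) ∧ c₁ * (σ c₁)⁻¹ * ε = η :=
  statement15_general σ ε hσ ρ η hρ hε hη c₁ c₂ hc₁ hiff1 hiff2
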